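/- arXiv:1605.09171 — 4 statements merged into one kernel-verified Lean document; each statement's English description precedes it below -/
import Mathlib

section
/- Consider a first-price auction with K bidders where every treated bid exceeds every control bid: Bᵢ(1) > Bⱼ(0) for all i, j, and bidders are labeled so B₁(1) > B₂(1) > ⋯ > B_K(1). Under independent fair-coin assignment of each bidder, for every assignment Z ≠ 0⃗ the auction winner is a treated bidder, and the estimator value τ̂(Z) = 2·max{Bᵢ(1) : Zᵢ = 1} ≥ 2·B_K(1). Consequently E[τ̂] ≥ (1 − 2^{−K})·2·B_K(1) − 2^{−K}·2·max_j Bⱼ(0), giving the lower bound Bias(τ̂, τ) ≥ −τ + (1 − 2^{−K})·2·B_K(1) − 2^{−K}·2·maxⱼ Bⱼ(0), where τ = B₁(1) − maxⱼ Bⱼ(0). -/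
/- Dominated bids: every treated bid exceeds every control bid, and treated bids are
strictly decreasing in the bidder index.  Z is uniform on {0,1}^K (independent fair
coins).  For Z ≠ 0⃗ the winner is treated and τ̂(Z) = 2·max{B₁ᵢ : Zᵢ = 1} ≥ 2·B₁(K);
for Z = 0⃗, τ̂(Z) = −2·B₀max where B₀max = maxⱼ B₀ⱼ.  Hence
E[τ̂] ≥ (1 − 2^{−K})·2·B₁(K) − 2^{−K}·2·B₀max, and with τ = B₁(1) − B₀max,
Bias(τ̂,τ) = E[τ̂] − τ ≥ −τ + (1 − 2^{−K})·2·B₁(K) − 2^{−K}·2·B₀max. -/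
theorem stmt4 (K : ℕ) [NeZero K] (B1 B0 : Fin K → ℝ) (B0max : ℝ)
    (hpos : ∀ j, 0 < B0 j)
    (hdom : ∀ i j, B0 j < B1 i)
    (hdec : ∀ i j : Fin K, i < j → B1 j < B1 i)
    (hmaxle : ∀ j, B0 j ≤ B0max) (hmaxmem : ∃ j, B0 j = B0max)
    (lastIdx : Fin K) (hlast : ∀ i : Fin K, i ≤ lastIdx)
    (τ : ℝ) (hτ : τ = B1 0 - B0max)
    (tauhat : (Fin K → Bool) → ℝ)
    (htau : ∀ Z : Fin K → Bool,
      tauhat Z =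
        if h : (Finset.univ.filter (fun i => Z i = true)).Nonempty
        then 2 * (Finset.univ.filter (fun i => Z i = true)).sup' h B1
        else -2 * B0max) :
    (∀ Z : Fin K → Bool, (∃ i, Z i = true) → 2 * B1 lastIdx ≤ tauhat Z) ∧
    (1 - (1/2 : ℝ) ^ K) * (2 * B1 lastIdx) - (1/2 : ℝ) ^ K * (2 * B0max)
      ≤ (∑ Z : Fin K → Bool, tauhat Z) / 2 ^ K ∧
    -τ + (1 - (1/2 : ℝ) ^ K) * (2 * B1 lastIdx) - (1/2 : ℝ) ^ K * (2 * B0max)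
      ≤ (∑ Z : Fin K → Bool, tauhat Z) / 2 ^ K - τ := by
  have hlastle : ∀ i : Fin K, B1 lastIdx ≤ B1 i := by
    intro i
    rcases lt_or_eq_of_le (hlast i) with h | h
    · exact le_of_lt (hdec i lastIdx h)
    · rw [h]
  have key : ∀ Z : Fin K → Bool, (∃ i, Z i = true) → 2 * B1 lastIdx ≤ tauhat Z := by
    intro Z ⟨i, hi⟩
    rw [htau Z]
    have hne : (Finset.univ.filter (fun i => Z i = true)).Nonempty :=
      ⟨i, by simp [hi]⟩
    rw [dif_pos hne]
    have : B1 lastIdx ≤ (Finset.univ.filter (fun i => Z i = true)).sup' hne B1 :=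
      le_trans (hlastle i) (Finset.le_sup' B1 (by simp [hi]))
    linarith
  refine ⟨key, ?_, ?_⟩
  · -- pointwise lower bound g
    have hpt : ∀ Z : Fin K → Bool,
        2 * B1 lastIdx + (if Z = (fun _ => false) then (-2 * B0max - 2 * B1 lastIdx) else 0)
          ≤ tauhat Z := by
      intro Z
      by_cases hZ : Z = (fun _ => false)
      · rw [if_pos hZ, htau Z, hZ]
        have : ¬ (Finset.univ.filter (fun i : Fin K => false = true)).Nonempty := by
          simp
        rw [dif_neg (by simp)]
        linarith
      · rw [if_neg hZ, add_zero]
        apply key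
        by_contra h
        push_neg at h
        apply hZ
        funext i
        simpa using h i
    have hsum : (2:ℝ)^K * (2 * B1 lastIdx) + (-2 * B0max - 2 * B1 lastIdx)
        ≤ ∑ Z : Fin K → Bool, tauhat Z := by
      calc (2:ℝ)^K * (2 * B1 lastIdx) + (-2 * B0max - 2 * B1 lastIdx)
          = ∑ Z : Fin K → Bool,
              (2 * B1 lastIdx + (if Z = (fun _ => false) then (-2 * B0max - 2 * B1 lastIdx) else 0)) := by
            rw [Finset.sum_add_distrib, Finset.sum_const, Finset.sum_ite_eq' Finset.univ]
            simp [Fintype.card_fun]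
        _ ≤ _ := Finset.sum_le_sum (fun Z _ => hpt Z)
    have hpow : (0:ℝ) < 2 ^ K := by positivity
    rw [le_div_iff₀ hpow]
    have h2 : ((1:ℝ)/2)^K * 2^K = 1 := by
      rw [div_pow, one_pow]; field_simp
    have expand : ((1 - (1/2:ℝ)^K) * (2*B1 lastIdx) - (1/2:ℝ)^K*(2*B0max)) * 2^K
        = 2^K*(2*B1 lastIdx) - 2*B1 lastIdx - 2*B0max := by
      linear_combination (-(2*B1 lastIdx) - 2*B0max) * h2
    linarith [hsum, expand]
  · have hpow : (0:ℝ) < 2 ^ K := by positivity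
    have h2 : ((1:ℝ)/2)^K * 2^K = 1 := by
      rw [div_pow, one_pow]; field_simp
    have : (1 - (1/2 : ℝ) ^ K) * (2 * B1 lastIdx) - (1/2 : ℝ) ^ K * (2 * B0max)
      ≤ (∑ Z : Fin K → Bool, tauhat Z) / 2 ^ K := by
      rw [le_div_iff₀ hpow]
      have hsum : (2:ℝ)^K * (2 * B1 lastIdx) + (-2 * B0max - 2 * B1 lastIdx)
          ≤ ∑ Z : Fin K → Bool, tauhat Z := by
        calc (2:ℝ)^K * (2 * B1 lastIdx) + (-2 * B0max - 2 * B1 lastIdx)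
            = ∑ Z : Fin K → Bool,
                (2 * B1 lastIdx + (if Z = (fun _ => false) then (-2 * B0max - 2 * B1 lastIdx) else 0)) := by
              rw [Finset.sum_add_distrib, Finset.sum_const, Finset.sum_ite_eq' Finset.univ]
              simp [Fintype.card_fun]
          _ ≤ _ := Finset.sum_le_sum (fun Z _ => by
              by_cases hZ : Z = (fun _ => false)
              · rw [if_pos hZ, htau Z, hZ, dif_neg (by simp)]
                linarith
              · rw [if_neg hZ, add_zero]
                apply key
                by_contra h
                push_neg at h
                exact hZ (funext fun i => by simpa using h i))
      have expand : ((1 - (1/2:ℝ)^K) * (2*B1 lastIdx) - (1/2:ℝ)^K*(2*B0max)) * 2^K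
          = 2^K*(2*B1 lastIdx) - 2*B1 lastIdx - 2*B0max := by
        linear_combination (-(2*B1 lastIdx) - 2*B0max) * h2
      linarith [hsum, expand]
    linarith
end

section
/- In the dominated-bids setting, the expected estimator satisfies E[τ̂] = 2·Σ_{k=1}^{K} B_k(1)·(1/2)^k − 2^{−K}·2·B*, where B* = maxⱼ Bⱼ(0); here, for Z ≠ 0⃗ the winner is the treated bidder with smallest index among treated bidders, and bidder k is the winner iff Z₁ = ⋯ = Z_{k−1} = 0 and Z_k = 1, an event of probability 2^{−k}. -/
open Finset

/-- The fiber `{Z | Z k = true ∧ ∀ j < k, Z j = false}` is in bijection with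
the boolean functions on indices above `k`. -/
def firstTrueFiberEquiv (K : ℕ) (k : Fin K) :
    {Z : Fin K → Bool // Z k = true ∧ ∀ j < k, Z j = false} ≃
      ({j : Fin K // k < j} → Bool) where
  toFun Z j := Z.1 j.1
  invFun g := ⟨fun j => if h : k < j then g ⟨j, h⟩ else decide (j = k), by
    constructor
    · simp
    · intro j hj
      have : ¬ k < j := not_lt.2 hj.le
      simp [this, hj.ne]⟩
  left_inv := by
    rintro ⟨Z, hZk, hZlt⟩
    ext j
    by_cases h : k < j
    · simp [h]
    · rcases lt_or_eq_of_le (not_lt.1 h) with h' | h'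
      · simp [h, h'.ne, hZlt j h']
      · subst h'; simp [hZk]
  right_inv := by
    intro g
    ext j
    simp [j.2]

lemma firstTrue_fiber_card (K : ℕ) (k : Fin K) :
    (Finset.univ.filter
        (fun Z : Fin K → Bool => Z k = true ∧ ∀ j < k, Z j = false)).card
      = 2 ^ (K - 1 - (k : ℕ)) := by
  classical
  rw [← Fintype.card_subtype]
  rw [Fintype.card_congr (firstTrueFiberEquiv K k)]
  rw [Fintype.card_fun]
  have hb : Fintype.card Bool = 2 := Fintype.card_bool
  have hs : Fintype.card {j : Fin K // k < j} = K - 1 - (k : ℕ) := by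
    rw [Fintype.card_subtype]
    have : (Finset.univ.filter (fun j : Fin K => k < j)) = Finset.Ioi k := by
      ext j; simp
    rw [this, Fin.card_Ioi]
  rw [hb, hs]

theorem stmt5 (K : ℕ) [NeZero K] (B1 B0 : Fin K → ℝ) (B0max : ℝ)
    (hpos : ∀ j, 0 < B0 j)
    (hdom : ∀ i j, B0 j < B1 i)
    (hdec : ∀ i j : Fin K, i < j → B1 j < B1 i)
    (hmaxle : ∀ j, B0 j ≤ B0max) (hmaxmem : ∃ j, B0 j = B0max)
    (tauhat : (Fin K → Bool) → ℝ)
    (htau : ∀ Z : Fin K → Bool,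
      tauhat Z =
        if h : (Finset.univ.filter (fun i => Z i = true)).Nonempty
        then 2 * (Finset.univ.filter (fun i => Z i = true)).sup' h B1
        else -2 * B0max) :
    (∀ (Z : Fin K → Bool) (k : Fin K),
        Z k = true → (∀ j : Fin K, j < k → Z j = false) → tauhat Z = 2 * B1 k) ∧
    (∑ Z : Fin K → Bool, tauhat Z) / 2 ^ K
      = 2 * (∑ k : Fin K, (1/2 : ℝ) ^ ((k : ℕ) + 1) * B1 k)
        - 2 * (1/2 : ℝ) ^ K * B0max := by
  classical
  have part1 : ∀ (Z : Fin K → Bool) (k : Fin K),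
      Z k = true → (∀ j : Fin K, j < k → Z j = false) → tauhat Z = 2 * B1 k := by
    intro Z k hk hlt
    have hkmem : k ∈ Finset.univ.filter (fun i => Z i = true) := by simp [hk]
    have hne : (Finset.univ.filter (fun i => Z i = true)).Nonempty := ⟨k, hkmem⟩
    rw [htau Z, dif_pos hne]
    congr 1
    apply le_antisymm
    · apply Finset.sup'_le
      intro i hi
      rcases lt_trichotomy k i with h | h | h
      · exact (hdec k i h).le
      · exact h ▸ le_rfl
      · exact absurd (hlt i h) (by simp [(Finset.mem_filter.1 hi).2])
    · exact Finset.le_sup' B1 hkmem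
  refine ⟨part1, ?_⟩
  -- the "first treated index" map
  set m : (Fin K → Bool) → Option (Fin K) := fun Z =>
    if h : (Finset.univ.filter (fun i => Z i = true)).Nonempty
    then some ((Finset.univ.filter (fun i => Z i = true)).min' h)
    else none with hm
  set F : Option (Fin K) → ℝ := Option.elim' (-2 * B0max) (fun k => 2 * B1 k) with hF
  have hmval : ∀ Z : Fin K → Bool, tauhat Z = F (m Z) := by
    intro Z
    by_cases h : (Finset.univ.filter (fun i => Z i = true)).Nonempty
    · have hkmem := Finset.min'_mem _ h
      set k := (Finset.univ.filter (fun i => Z i = true)).min' h with hk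
      have hZk : Z k = true := (Finset.mem_filter.1 hkmem).2
      have hZlt : ∀ j : Fin K, j < k → Z j = false := by
        intro j hj
        by_contra hj'
        have : Z j = true := by simpa using hj'
        have : k ≤ j := Finset.min'_le _ j (by simp [this])
        exact absurd hj (not_lt.2 this)
      rw [part1 Z k hZk hZlt, hm]
      simp only [dif_pos h, hF, Option.elim']
      rfl
    · rw [htau Z, dif_neg h, hm]
      simp only [dif_neg h, hF, Option.elim']
  -- characterize fibers
  have hfib_none : (Finset.univ.filter (fun Z : Fin K → Bool => m Z = none))
      = {fun _ => false} := by
    ext Z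
    simp only [Finset.mem_filter, Finset.mem_univ, true_and, Finset.mem_singleton, hm]
    constructor
    · intro h
      by_cases hne : (Finset.univ.filter (fun i => Z i = true)).Nonempty
      · simp [dif_pos hne] at h
      · funext i
        by_contra hi
        exact hne ⟨i, by simp [Bool.eq_false_iff.not.1 (by simpa using hi), eq_true_of_ne_false (by simpa using hi)]⟩
    · intro h
      subst h
      rw [dif_neg]
      simp
  have hfib_some : ∀ k : Fin K,
      (Finset.univ.filter (fun Z : Fin K → Bool => m Z = some k))
        = (Finset.univ.filter
            (fun Z : Fin K → Bool => Z k = true ∧ ∀ j < k, Z j = false)) := by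
    intro k
    ext Z
    simp only [Finset.mem_filter, Finset.mem_univ, true_and, hm]
    constructor
    · intro h
      by_cases hne : (Finset.univ.filter (fun i => Z i = true)).Nonempty
      · rw [dif_pos hne] at h
        have hk : (Finset.univ.filter (fun i => Z i = true)).min' hne = k :=
          Option.some_injective _ h
        have hkmem := Finset.min'_mem _ hne
        rw [hk] at hkmem
        refine ⟨(Finset.mem_filter.1 hkmem).2, ?_⟩
        intro j hj
        by_contra hj'
        have hjt : Z j = true := by simpa using hj'
        have : (Finset.univ.filter (fun i => Z i = true)).min' hne ≤ j :=
          Finset.min'_le _ j (by simp [hjt])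
        rw [hk] at this
        exact absurd hj (not_lt.2 this)
      · rw [dif_neg hne] at h; exact absurd h (by simp)
    · rintro ⟨hk, hlt⟩
      have hkmem : k ∈ Finset.univ.filter (fun i => Z i = true) := by simp [hk]
      have hne : (Finset.univ.filter (fun i => Z i = true)).Nonempty := ⟨k, hkmem⟩
      rw [dif_pos hne]
      congr 1
      apply le_antisymm (Finset.min'_le _ k hkmem)
      by_contra h
      push_neg at h
      have := hlt _ h
      have hmem := Finset.min'_mem _ hne
      rw [Finset.mem_filter] at hmem
      rw [this] at hmem
      simp at hmem
  -- fiberwise sum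
  have hsum : (∑ Z : Fin K → Bool, tauhat Z)
      = ∑ o : Option (Fin K),
          ((Finset.univ.filter (fun Z : Fin K → Bool => m Z = o)).card : ℝ) * F o := by
    rw [← Finset.sum_fiberwise Finset.univ m tauhat]
    refine Finset.sum_congr rfl fun o _ => ?_
    rw [Finset.sum_congr rfl (fun Z hZ => by
      rw [hmval Z, (Finset.mem_filter.1 hZ).2])]
    rw [Finset.sum_const, nsmul_eq_mul]
  rw [hsum, Fintype.sum_option]
  rw [hfib_none]
  have hcards : ∀ k : Fin K,
      ((Finset.univ.filter (fun Z : Fin K → Bool => m Z = some k)).card : ℝ)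
        = 2 ^ (K - 1 - (k : ℕ)) := by
    intro k
    rw [hfib_some k, firstTrue_fiber_card K k]
    push_cast
    ring
  have hterm : ∀ k : Fin K,
      ((Finset.univ.filter (fun Z : Fin K → Bool => m Z = some k)).card : ℝ) * F (some k) / 2 ^ K
        = 2 * ((1/2 : ℝ) ^ ((k : ℕ) + 1) * B1 k) := by
    intro k
    rw [hcards k]
    have hk : (k : ℕ) < K := k.isLt
    have hpow : (2 : ℝ) ^ (K - 1 - (k : ℕ)) * 2 ^ ((k : ℕ) + 1) = 2 ^ K := by
      rw [← pow_add]
      congr 1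
      omega
    have h2K : (2 : ℝ) ^ K ≠ 0 := by positivity
    have h2k : (2 : ℝ) ^ ((k : ℕ) + 1) ≠ 0 := by positivity
    have hFk : F (some k) = 2 * B1 k := rfl
    rw [hFk]
    rw [div_eq_iff h2K]
    rw [← hpow]
    have : (1/2 : ℝ) ^ ((k : ℕ) + 1) = ((2 : ℝ) ^ ((k : ℕ) + 1))⁻¹ := by
      rw [one_div, inv_pow]
    rw [this]
    field_simp
  have hsplit : (((({fun _ => false} : Finset (Fin K → Bool))).card : ℝ) * F none
      + ∑ k : Fin K,
          ((Finset.univ.filter (fun Z : Fin K → Bool => m Z = some k)).card : ℝ) * F (some k)) / 2 ^ K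
      = ((({fun _ => false} : Finset (Fin K → Bool))).card : ℝ) * F none / 2 ^ K
        + ∑ k : Fin K,
          ((Finset.univ.filter (fun Z : Fin K → Bool => m Z = some k)).card : ℝ) * F (some k) / 2 ^ K := by
    rw [add_div, Finset.sum_div]
  rw [hsplit]
  rw [Finset.sum_congr rfl (fun k _ => hterm k)]
  have hFnone : F none = -2 * B0max := rfl
  rw [hFnone, Finset.card_singleton]
  rw [← Finset.mul_sum]
  have : (1/2 : ℝ) ^ K = ((2 : ℝ) ^ K)⁻¹ := by rw [one_div, inv_pow]
  rw [this]
  have h2K : (2 : ℝ) ^ K ≠ 0 := by positivity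
  field_simp
  ring
end

section
/- Unbiasedness with joint random throttling under query randomization: suppose for each advertiser a, a uniformly random subset W_a of size Q[a] of its N[a] eligible queries is retained, independently of the query assignment Z (bid treatment: the throttling distribution does not depend on Z). Under query randomization with probability p per query, the estimator τ̂(Z,W) = Σ_{i: Z_i=1, W_i=1} Yᵢ(Z,W)/p − Σ_{i: Z_i=0, W_i=1} Yᵢ(Z,W)/(1−p) is unbiased for τ* = E_W[Σᵢ(Yᵢ(1⃗,W) − Yᵢ(0⃗,W))]. -/
/- Under query randomization every pair's estimator term depends on Z only through its own
query's coin Z (q i), so its expectation is taken against a single Bernoulli(p) coin, where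
the 1/p and 1/(1 - p) weights cancel. The throttling W enters only as an outer average that
does not depend on Z. -/

open Finset

lemma sum_prod_mul_apply {ι κ R : Type*} [Fintype ι] [DecidableEq ι] [Fintype κ]
    [CommSemiring R] {w : κ → R} (hw : ∑ b, w b = 1) (r₀ : ι) (φ : κ → R) :
    ∑ Z : ι → κ, (∏ r, w (Z r)) * φ (Z r₀) = ∑ b, w b * φ b := by
  let f : ι → κ → R := fun r b => w b * if r = r₀ then φ b else 1
  have hprod : ∀ Z : ι → κ, (∏ r, w (Z r)) * φ (Z r₀) = ∏ r, f r (Z r) := by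
    intro Z
    simp only [f, prod_mul_distrib, prod_ite_eq', mem_univ, if_true]
  have hsum : ∀ r, ∑ b, f r b = if r = r₀ then ∑ b, w b * φ b else 1 := by
    intro r
    split_ifs <;> simp_all [f]
  simp_rw [hprod, ← Fintype.prod_sum, hsum, prod_ite_eq', mem_univ, if_true]

lemma sum_bernoulli_weight (p : ℝ) : ∑ b : Bool, (if b then p else 1 - p) = 1 := by
  simp

lemma htEstimator_eq_sum_ite {α ι : Type*} [Fintype α] (q : α → ι) (p : ℝ)
    (Y : α → (ι → Bool) → ℝ) (hY : ∀ i Z Z', Z (q i) = Z' (q i) → Y i Z = Y i Z')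
    (Z : ι → Bool) :
    (∑ i ∈ univ.filter (fun i => Z (q i) = true), Y i Z / p)
        - ∑ i ∈ univ.filter (fun i => Z (q i) = false), Y i Z / (1 - p)
      = ∑ i, if Z (q i) then Y i (fun _ => true) / p
          else -(Y i (fun _ => false) / (1 - p)) := by
  rw [sum_filter, sum_filter, ← sum_sub_distrib]
  refine sum_congr rfl fun i _ => ?_
  cases hZ : Z (q i)
  · simp [hY i Z (fun _ => false) (by simp [hZ])]
  · simp [hY i Z (fun _ => true) (by simp [hZ])]

theorem sum_bernoulli_mul_htEstimator {α ι : Type*} [Fintype α] [Fintype ι] [DecidableEq ι]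
    (q : α → ι) {p : ℝ} (hp : p ≠ 0) (hp1 : 1 - p ≠ 0)
    (Y : α → (ι → Bool) → ℝ) (hY : ∀ i Z Z', Z (q i) = Z' (q i) → Y i Z = Y i Z') :
    ∑ Z : ι → Bool, (∏ r, if Z r then p else 1 - p) *
        ((∑ i ∈ univ.filter (fun i => Z (q i) = true), Y i Z / p)
          - ∑ i ∈ univ.filter (fun i => Z (q i) = false), Y i Z / (1 - p))
      = ∑ i, (Y i (fun _ => true) - Y i (fun _ => false)) := by
  simp_rw [htEstimator_eq_sum_ite q p Y hY, mul_sum]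
  rw [sum_comm]
  refine sum_congr rfl fun i _ => ?_
  rw [sum_prod_mul_apply (sum_bernoulli_weight p) (q i)
    (fun b => if b then Y i (fun _ => true) / p else -(Y i (fun _ => false) / (1 - p)))]
  simp only [Fintype.sum_bool, if_true, Bool.false_eq_true, if_false]
  field_simp
  ring

theorem stmt10_general (Nq n m : ℕ) (q : Fin n → Fin Nq) (p : ℝ) (hp : 0 < p) (hp1 : p < 1)
    (μ : Fin m → ℝ)
    (Y : Fin n → (Fin Nq → Bool) → Fin m → ℝ)
    (hY : ∀ (i : Fin n) (Z Z' : Fin Nq → Bool) (w : Fin m),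
      Z (q i) = Z' (q i) → Y i Z w = Y i Z' w) :
    ∑ w : Fin m, μ w *
      (∑ Z : Fin Nq → Bool,
        (∏ r, if Z r then p else 1 - p) *
          ((∑ i ∈ Finset.univ.filter (fun i => Z (q i) = true), Y i Z w / p)
           - ∑ i ∈ Finset.univ.filter (fun i => Z (q i) = false), Y i Z w / (1 - p)))
    = ∑ w : Fin m, μ w *
        (∑ i, (Y i (fun _ => true) w - Y i (fun _ => false) w)) := by
  refine sum_congr rfl fun w _ => ?_
  rw [sum_bernoulli_mul_htEstimator q hp.ne' (sub_ne_zero.mpr hp1.ne')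
    (fun i Z => Y i Z w) (fun i Z Z' h => hY i Z Z' w h)]

theorem stmt10 (Nq n m : ℕ) (q : Fin n → Fin Nq) (p : ℝ) (hp : 0 < p) (hp1 : p < 1)
    (μ : Fin m → ℝ) (hμ0 : ∀ w, 0 ≤ μ w) (hμ1 : ∑ w, μ w = 1)
    (Y : Fin n → (Fin Nq → Bool) → Fin m → ℝ)
    (hY : ∀ (i : Fin n) (Z Z' : Fin Nq → Bool) (w : Fin m),
      Z (q i) = Z' (q i) → Y i Z w = Y i Z' w) :
    ∑ w : Fin m, μ w *
      (∑ Z : Fin Nq → Bool,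
        (∏ r, if Z r then p else 1 - p) *
          ((∑ i ∈ Finset.univ.filter (fun i => Z (q i) = true), Y i Z w / p)
           - ∑ i ∈ Finset.univ.filter (fun i => Z (q i) = false), Y i Z w / (1 - p)))
    = ∑ w : Fin m, μ w *
        (∑ i, (Y i (fun _ => true) w - Y i (fun _ => false) w)) :=
  stmt10_general Nq n m q p hp hp1 μ Y hY
end

section
/- Bias of the joint-throttling estimator for a quota treatment in a simple model: consider one advertiser with quota Q and N eligible queries (Q < N), each query having fixed value v > 0 to the exchange if served. Under joint throttling the advertiser always serves exactly Q queries regardless of the treatment assignment, so total realized revenue is Q·v for every assignment Z; hence for a quota treatment whose true effect τ* may be nonzero, the Horvitz–Thompson estimator based on realized revenues has expectation E[τ̂] whose value, under balanced query randomization with p = 1/2 and symmetric random throttling, equals 0. In particular the relative bias E[τ̂]/τ* − 1 equals −1 whenever τ* ≠ 0. -/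
/- The realized estimate is antisymmetric under swapping treatment and control, and
swapping is a bijection of the assignments, so the estimates cancel in pairs. -/

open Finset Function

theorem Function.Involutive.sum_eq_zero_of_comp_eq_neg {α G : Type*} [Fintype α]
    [AddCommGroup G] [IsAddTorsionFree G] {g : α → α} (hg : Involutive g) {f : α → G}
    (hf : ∀ a, f (g a) = -f a) : ∑ a, f a = 0 := by
  have h := hg.bijective.sum_comp f
  simp only [hf, sum_neg_distrib] at h
  exact neg_eq_self.mp h

/-- Horvitz–Thompson estimate for treatment probability `p = 1/2` (the factors `2 = 1/p`),
given the served set `S`. -/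
def htEstimate {ι : Type*} (v : ℝ) (Z : ι → Bool) (S : Finset ι) : ℝ :=
  2 * v * (#(S.filter fun i => Z i = true) : ℝ) - 2 * v * (#(S.filter fun i => Z i = false) : ℝ)

theorem htEstimate_not {ι : Type*} (v : ℝ) (Z : ι → Bool) (S : Finset ι) :
    htEstimate v (fun i => !Z i) S = -htEstimate v Z S := by
  simp only [htEstimate, Bool.not_eq_eq_eq_not, Bool.not_true, Bool.not_false]
  ring

theorem sum_htEstimate_eq_zero {ι : Type*} [Fintype ι] [DecidableEq ι]
    (𝒮 : Finset (Finset ι)) (v : ℝ) :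
    ∑ Z : ι → Bool, ∑ S ∈ 𝒮, htEstimate v Z S = 0 :=
  Involutive.sum_eq_zero_of_comp_eq_neg (g := fun Z i => !Z i)
    (fun Z => funext fun i => Bool.not_not (Z i))
    (fun Z => by simp only [htEstimate_not, sum_neg_distrib])

theorem stmt11_general (N Q : ℕ) (v : ℝ) :
    (∑ Z : Fin N → Bool,
        ∑ S ∈ Finset.powersetCard Q (Finset.univ : Finset (Fin N)),
          (2 * v * ((S.filter (fun i => Z i = true)).card : ℝ)
           - 2 * v * ((S.filter (fun i => Z i = false)).card : ℝ)))
      / ((2 ^ N : ℝ) * ((Finset.powersetCard Q (Finset.univ : Finset (Fin N))).card : ℝ))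
      = 0 ∧
    ∀ τstar : ℝ, τstar ≠ 0 →
      (∑ Z : Fin N → Bool,
          ∑ S ∈ Finset.powersetCard Q (Finset.univ : Finset (Fin N)),
            (2 * v * ((S.filter (fun i => Z i = true)).card : ℝ)
             - 2 * v * ((S.filter (fun i => Z i = false)).card : ℝ)))
        / ((2 ^ N : ℝ) * ((Finset.powersetCard Q (Finset.univ : Finset (Fin N))).card : ℝ))
        / τstar - 1 = -1 := by
  have h := sum_htEstimate_eq_zero (powersetCard Q (univ : Finset (Fin N))) v
  unfold htEstimate at h
  rw [h]
  simp

theorem stmt11 (N Q : ℕ) (hQN : Q < N) (v : ℝ) (hv : 0 < v) :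
    (∑ Z : Fin N → Bool,
        ∑ S ∈ Finset.powersetCard Q (Finset.univ : Finset (Fin N)),
          (2 * v * ((S.filter (fun i => Z i = true)).card : ℝ)
           - 2 * v * ((S.filter (fun i => Z i = false)).card : ℝ)))
      / ((2 ^ N : ℝ) * ((Finset.powersetCard Q (Finset.univ : Finset (Fin N))).card : ℝ))
      = 0 ∧
    ∀ τstar : ℝ, τstar ≠ 0 →
      (∑ Z : Fin N → Bool,
          ∑ S ∈ Finset.powersetCard Q (Finset.univ : Finset (Fin N)),
            (2 * v * ((S.filter (fun i => Z i = true)).card : ℝ)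
             - 2 * v * ((S.filter (fun i => Z i = false)).card : ℝ)))
        / ((2 ^ N : ℝ) * ((Finset.powersetCard Q (Finset.univ : Finset (Fin N))).card : ℝ))
        / τstar - 1 = -1 :=
  stmt11_general N Q v
end
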